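/- For every β > 0 and every x ∈ ℝ, the softplus function is the convolution of ReLU with the density p_β: softplus_β(x) = ∫_ℝ p_β(ε) · relu(x − ε) dε. -/

import Mathlib

open MeasureTheory

noncomputable def softplus (β x : ℝ) : ℝ := (1 / β) * Real.log (1 + Real.exp (β * x))

noncomputable def pdens (β ε : ℝ) : ℝ :=
  β / (Real.exp (β * ε / 2) + Real.exp (-(β * ε / 2))) ^ 2

noncomputable def relu (x : ℝ) : ℝ := max x 0

/-!
With `σ` the logistic sigmoid, `p_β(t) = d/dt σ(βt)` and `softplus_β' = σ(β·)`, so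
`F(t) = (x - t) σ(βt) + softplus_β(t)` is a primitive of `p_β(t) (x - t)`. The factor
`relu (x - t)` cuts the integral down to `(-∞, x]`, where this integrand is nonnegative; as `F`
tends to `0` at `-∞`, the integral converges and equals `F(x) = softplus_β(x)`.
-/

open Set Filter Topology Real

theorem integral_Iic_of_hasDerivAt_of_nonneg' {g g' : ℝ → ℝ} {a m : ℝ}
    (hderiv : ∀ x ∈ Iic a, HasDerivAt g (g' x) x) (g'pos : ∀ x ∈ Iio a, 0 ≤ g' x)
    (hg : Tendsto g atBot (𝓝 m)) : ∫ x in Iic a, g' x = g a - m := by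
  have hderiv_neg : ∀ y ∈ Ici (-a), HasDerivAt (fun y => -g (-y)) (g' (-y)) y := fun y hy =>
    ((hderiv (-y) (neg_le.mp (mem_Ici.mp hy))).comp y (hasDerivAt_neg y)).neg.congr_deriv (by ring)
  have hg_neg : Tendsto (fun y => -g (-y)) atTop (𝓝 (-m)) :=
    (hg.comp tendsto_neg_atTop_atBot).neg
  calc ∫ x in Iic a, g' x = ∫ y in Ioi (-a), g' (-y) := by
        rw [← integral_comp_neg_Iic]
        simp only [neg_neg]
    _ = g a - m := by
        rw [integral_Ioi_of_hasDerivAt_of_nonneg' hderiv_neg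
          (fun y hy => g'pos (-y) (neg_lt.mp (mem_Ioi.mp hy))) hg_neg, neg_neg]
        ring

theorem mul_relu_sub_eq_indicator (f : ℝ → ℝ) (x ε : ℝ) :
    f ε * relu (x - ε) = (Iic x).indicator (fun ε => f ε * (x - ε)) ε := by
  by_cases h : ε ≤ x
  · simp [relu, h]
  · simp [relu, h, (not_le.1 h).le]

theorem pdens_eq_mul_sigmoid (β t : ℝ) :
    pdens β t = β * (sigmoid (β * t) * (1 - sigmoid (β * t))) := by
  rw [pdens, ← sigmoid_neg, sigmoid_def, sigmoid_def, neg_neg]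
  have h : exp (β * t) = exp (β * t / 2) ^ 2 := by rw [← exp_nat_mul]; ring_nf
  have h' : exp (-(β * t)) = exp (-(β * t / 2)) ^ 2 := by rw [← exp_nat_mul]; ring_nf
  have hprod : exp (β * t / 2) * exp (-(β * t / 2)) = 1 := by rw [← exp_add]; simp
  rw [h, h']
  field_simp
  linear_combination β * (exp (β * t / 2) * exp (-(β * t / 2)) - 1) * hprod

theorem hasDerivAt_sigmoid_mul (β t : ℝ) :
    HasDerivAt (fun t => sigmoid (β * t)) (pdens β t) t := by
  rw [pdens_eq_mul_sigmoid]
  exact ((hasDerivAt_sigmoid (β * t)).comp t ((hasDerivAt_id' t).const_mul β)).congr_deriv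
    (by ring)

theorem hasDerivAt_softplus {β : ℝ} (hβ : β ≠ 0) (t : ℝ) :
    HasDerivAt (softplus β) (sigmoid (β * t)) t := by
  have hpos : 0 < 1 + exp (β * t) := by positivity
  refine ((((hasDerivAt_id' t).const_mul β).exp.const_add 1).log hpos.ne').const_mul (1 / β)
    |>.congr_deriv ?_
  rw [sigmoid_def, exp_neg]
  field_simp
  ring

theorem tendsto_softplus_atBot {β : ℝ} (hβ : 0 < β) : Tendsto (softplus β) atBot (𝓝 0) := by
  have h : Tendsto (fun t => 1 + exp (β * t)) atBot (𝓝 1) := by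
    simpa using (tendsto_exp_atBot.comp (tendsto_id.const_mul_atBot hβ)).const_add 1
  unfold softplus
  simpa using ((continuousAt_log one_ne_zero).tendsto.comp h).const_mul (1 / β)

theorem tendsto_mul_sigmoid_atBot : Tendsto (fun y => y * sigmoid y) atBot (𝓝 0) := by
  have h : Tendsto (fun y => y * exp y) atBot (𝓝 0) := by
    simpa [Function.comp_def] using
      ((tendsto_pow_mul_exp_neg_atTop_nhds_zero 1).comp tendsto_neg_atBot_atTop).neg
  have h' : Tendsto (fun y => sigmoid (-y)) atBot (𝓝 1) :=
    tendsto_sigmoid_atTop.comp tendsto_neg_atBot_atTop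
  refine Tendsto.congr (fun y => ?_) (by simpa using h.mul h')
  have h_eq := sigmoid_mul_rexp_neg (-y)
  rw [neg_neg] at h_eq
  rw [← h_eq]
  ring

theorem pdens_nonneg {β : ℝ} (hβ : 0 ≤ β) (t : ℝ) : 0 ≤ pdens β t := by
  unfold pdens
  positivity

theorem hasDerivAt_sub_mul_sigmoid_add_softplus {β : ℝ} (hβ : β ≠ 0) (x t : ℝ) :
    HasDerivAt (fun t => (x - t) * sigmoid (β * t) + softplus β t) (pdens β t * (x - t)) t :=
  (((hasDerivAt_id' t).const_sub x).mul (hasDerivAt_sigmoid_mul β t)).add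
    (hasDerivAt_softplus hβ t) |>.congr_deriv (by ring)

theorem tendsto_sub_mul_sigmoid_add_softplus_atBot {β : ℝ} (hβ : 0 < β) (x : ℝ) :
    Tendsto (fun t => (x - t) * sigmoid (β * t) + softplus β t) atBot (𝓝 0) := by
  have hlin : Tendsto (fun t => β * t) atBot atBot := tendsto_id.const_mul_atBot hβ
  have hσ := tendsto_sigmoid_atBot.comp hlin
  have hmul := tendsto_mul_sigmoid_atBot.comp hlin
  have h := ((hσ.const_mul x).sub (hmul.const_mul β⁻¹)).add (tendsto_softplus_atBot hβ)
  simp only [mul_zero, sub_zero, add_zero] at h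
  refine h.congr fun t => ?_
  simp only [Function.comp_apply]
  field_simp

/-- For every `β > 0` and every `x ∈ ℝ`, the softplus function is the convolution of
ReLU with the density `p_β`:  `softplus_β(x) = ∫_ℝ p_β(ε) · relu(x − ε) dε`. -/
theorem softplus_eq_integral_pdens_mul_relu (β : ℝ) (hβ : 0 < β) (x : ℝ) :
    ∫ ε : ℝ, pdens β ε * relu (x - ε) = softplus β x := by
  simp_rw [mul_relu_sub_eq_indicator]
  rw [integral_indicator measurableSet_Iic,
    integral_Iic_of_hasDerivAt_of_nonneg'
      (fun t _ => hasDerivAt_sub_mul_sigmoid_add_softplus hβ.ne' x t)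
      (fun t ht => mul_nonneg (pdens_nonneg hβ.le t) (sub_nonneg.2 (le_of_lt ht)))
      (tendsto_sub_mul_sigmoid_add_softplus_atBot hβ x)]
  simp
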